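/- arXiv:2512.20715 — 2 statements merged into one kernel-verified Lean document; each statement's English description precedes it below -/
import Mathlib

section
/- Double-finalization at equal height implies massive slashing: if two distinct checkpoints t1 ≠ t2 with h(t1) = h(t2) are each justified via supermajority links, then validators of total stake at least W/3 cast two attestations with targets of equal height, i.e., violated the double-vote slashing condition. -/
theorem double_finalization_equal_height_slashing {Vd C : Type*} [DecidableEq Vd]
    (vals : Finset Vd) (w : Vd → ℝ) (hw : ∀ v, 0 ≤ w v)
    (W : ℝ) (hW : W = ∑ v ∈ vals, w v)
    (h : C → ℕ) (attested : Vd → C → C → Prop)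
    (s1 t1 s2 t2 : C) (hne : t1 ≠ t2) (hh : h t1 = h t2)
    (A1 A2 : Finset Vd) (hA1 : A1 ⊆ vals) (hA2 : A2 ⊆ vals)
    (hA1w : (2 / 3 : ℝ) * W ≤ ∑ v ∈ A1, w v)
    (hA2w : (2 / 3 : ℝ) * W ≤ ∑ v ∈ A2, w v)
    (hA1att : ∀ v ∈ A1, attested v s1 t1)
    (hA2att : ∀ v ∈ A2, attested v s2 t2) :
    W / 3 ≤ ∑ v ∈ A1 ∩ A2, w v ∧
      ∀ v ∈ A1 ∩ A2, ∃ s1' t1' s2' t2', attested v s1' t1' ∧ attested v s2' t2' ∧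
        (s1', t1') ≠ (s2', t2') ∧ h t1' = h t2' := by
  constructor
  · have hunion : ∑ v ∈ A1 ∪ A2, w v ≤ W := by
      rw [hW]
      exact Finset.sum_le_sum_of_subset_of_nonneg (Finset.union_subset hA1 hA2)
        (fun v _ _ => hw v)
    have hie : ∑ v ∈ A1 ∪ A2, w v + ∑ v ∈ A1 ∩ A2, w v
        = ∑ v ∈ A1, w v + ∑ v ∈ A2, w v :=
      Finset.sum_union_inter
    linarith
  · intro v hv
    rw [Finset.mem_inter] at hv
    exact ⟨s1, t1, s2, t2, hA1att v hv.1, hA2att v hv.2,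
      fun he => hne (congrArg Prod.snd he), hh⟩
end

section
/- GHOST majority-support lemma: if a block B has subtree weight strictly more than half of the total weight in the tree, then every run of the greedy heaviest-subtree rule starting from the root passes through B. -/
private lemma ghost_comparable {α : Type*} {child : α → α → Prop}
    (hparent : ∀ a a' b, child a b → child a' b → a = a') :
    ∀ {x b : α}, Relation.ReflTransGen child x b → ∀ y, Relation.ReflTransGen child y b →
      Relation.ReflTransGen child x y ∨ Relation.ReflTransGen child y x := by
  intro x b h
  induction h with
  | refl => intro y hy; exact Or.inr hy
  | @tail m b hxm hmb ih =>
    intro y hy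
    rcases hy.cases_tail with rfl | ⟨n, hyn, hnb⟩
    · exact Or.inl (hxm.tail hmb)
    · exact ih y (by rwa [hparent n m b hnb hmb] at hyn)

private lemma ghost_sibling_eq {α : Type*} {child : α → α → Prop}
    (hparent : ∀ a a' b, child a b → child a' b → a = a')
    (hacyc : ∀ a, ¬ Relation.TransGen child a a)
    {q c c' : α} (h1 : child q c) (h2 : child q c')
    (h : Relation.ReflTransGen child c c') : c = c' := by
  rcases h.cases_tail with rfl | ⟨n, hcn, hnc'⟩
  · rfl
  · have : n = q := hparent n q c' hnc' h2
    exact absurd (Relation.TransGen.head' h1 (this ▸ hcn)) (hacyc q)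

open Classical in
theorem ghost_majority_support {α : Type*}
    (blocks : Finset α) (root : α) (child : α → α → Prop)
    (w : α → ℝ) (hw : ∀ b, 0 ≤ w b)
    (hroot : root ∈ blocks)
    (hclosed : ∀ a b, child a b → a ∈ blocks ∧ b ∈ blocks)
    -- every block descends from the root, parents are unique, no cycles
    (hreach : ∀ b ∈ blocks, Relation.ReflTransGen child root b)
    (hparent : ∀ a a' b, child a b → child a' b → a = a')
    (hacyc : ∀ a, ¬ Relation.TransGen child a a)
    (T : ℝ) (hT : T = ∑ b ∈ blocks, w b)
    (Wsub : α → ℝ)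
    (hWsub : ∀ B, Wsub B =
      ∑ b ∈ blocks.filter (fun b => Relation.ReflTransGen child B b), w b)
    -- a GHOST run: starts at root, greedily takes a heaviest child, ends at a leaf
    (k : ℕ) (p : ℕ → α)
    (hp0 : p 0 = root)
    (hstep : ∀ i < k, child (p i) (p (i + 1)) ∧ ∀ c, child (p i) c → Wsub c ≤ Wsub (p (i + 1)))
    (hleaf : ∀ c, ¬ child (p k) c)
    -- B has majority subtree weight
    (B : α) (hB : B ∈ blocks) (hmaj : T / 2 < Wsub B) :
    ∃ i ≤ k, p i = B := by
  -- monotonicity of Wsub along ancestry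
  have hmono : ∀ x y : α, Relation.ReflTransGen child x y → Wsub y ≤ Wsub x := by
    intro x y hxy
    rw [hWsub, hWsub]
    apply Finset.sum_le_sum_of_subset_of_nonneg
    · intro b hb
      simp only [Finset.mem_filter] at hb ⊢
      exact ⟨hb.1, hxy.trans hb.2⟩
    · intro b _ _; exact hw b
  -- two majority subtrees intersect
  have hinter : ∀ x y : α, T / 2 < Wsub x → T / 2 < Wsub y →
      ∃ b, Relation.ReflTransGen child x b ∧ Relation.ReflTransGen child y b := by
    intro x y hx hy
    by_contra hcon
    push_neg at hcon
    have hdisj : Disjoint (blocks.filter (fun b => Relation.ReflTransGen child x b))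
        (blocks.filter (fun b => Relation.ReflTransGen child y b)) := by
      rw [Finset.disjoint_left]
      intro b hb1 hb2
      simp only [Finset.mem_filter] at hb1 hb2
      exact hcon b hb1.2 hb2.2
    have hsub : (blocks.filter (fun b => Relation.ReflTransGen child x b)) ∪
        (blocks.filter (fun b => Relation.ReflTransGen child y b)) ⊆ blocks := by
      intro b hb
      rcases Finset.mem_union.mp hb with h | h <;> exact (Finset.mem_filter.mp h).1
    have h1 : Wsub x + Wsub y ≤ T := by
      rw [hWsub, hWsub, ← Finset.sum_union hdisj, hT]
      exact Finset.sum_le_sum_of_subset_of_nonneg hsub (fun b _ _ => hw b)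
    linarith
  -- main invariant
  have key : ∀ i ≤ k, (∃ j ≤ i, p j = B) ∨ Relation.ReflTransGen child (p i) B := by
    intro i hi
    induction i with
    | zero => exact Or.inr (hp0 ▸ hreach B hB)
    | succ n ih =>
      rcases ih (Nat.le_of_succ_le hi) with ⟨j, hj, hjB⟩ | hanc
      · exact Or.inl ⟨j, Nat.le_succ_of_le hj, hjB⟩
      · rcases hanc.cases_head with rfl | ⟨c, hpc, hcB⟩
        · exact Or.inl ⟨n, Nat.le_succ_of_le le_rfl, rfl⟩
        · have hn : n < k := hi
          obtain ⟨hchild, hmax⟩ := hstep n hn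
          have hWc : T / 2 < Wsub c := lt_of_lt_of_le hmaj (hmono c B hcB)
          have hWn : T / 2 < Wsub (p (n + 1)) := lt_of_lt_of_le hWc (hmax c hpc)
          obtain ⟨b, hb1, hb2⟩ := hinter c (p (n + 1)) hWc hWn
          have hcomp := ghost_comparable hparent hb1 (p (n + 1)) hb2
          have heq : c = p (n + 1) := by
            rcases hcomp with h | h
            · exact ghost_sibling_eq hparent hacyc hpc hchild h
            · exact (ghost_sibling_eq hparent hacyc hchild hpc h).symm
          exact Or.inr (heq ▸ hcB)
  rcases key k le_rfl with ⟨j, hj, hjB⟩ | hanc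
  · exact ⟨j, hj, hjB⟩
  · rcases hanc.cases_head with rfl | ⟨c, hpc, _⟩
    · exact ⟨k, le_rfl, rfl⟩
    · exact absurd hpc (hleaf c)
end
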